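/- Let P_L be a set of literals over P, let s be a network state satisfying no literal of P_L, and let T be a strong stubborn set in s for P_L. Let σ = f₁, …, f_n with n ≥ 1 be a sequence over F applicable to s whose resulting state satisfies some literal of P_L, and whose cost is minimal among all such sequences. Let f_k be the action of σ with the smallest index that belongs to T (it exists by the landmark condition). Then f_k is applicable to s, f_k does not interfere with any of f₁, …, f_{k−1}, and the reordered sequence σ' = f_k, f₁, …, f_{k−1}, f_{k+1}, …, f_n is applicable to s, has the same cost as σ, and yields the same resulting state s[σ'] = s[σ]; in particular, there exists a minimal-cost sequence applicable to s whose result satisfies some literal of P_L and whose first action belongs to T and is applicable to s. -/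

import Mathlib

/-- A fix-action over network propositions `P`: precondition and postcondition
are finite sets of literals (a literal is a pair of a proposition and a
polarity, `true` for a positive and `false` for a negative occurrence),
containing at most one literal per proposition, together with a strictly
positive real cost. -/
structure FixAction (P : Type*) where
  pre : Finset (P × Bool)
  post : Finset (P × Bool)
  cost : ℝ
  cost_pos : 0 < cost
  pre_unique : ∀ (p : P) (b b' : Bool), (p, b) ∈ pre → (p, b') ∈ pre → b = b'
  post_unique : ∀ (p : P) (b b' : Bool), (p, b) ∈ post → (p, b') ∈ post → b = b'

variable {P : Type*} [DecidableEq P]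

/-- A network state `s` satisfies a literal `(p, true)` iff `p ∈ s`,
and satisfies `(p, false)` iff `p ∉ s`. -/
def satLit (s : Finset P) (l : P × Bool) : Prop :=
  (l.1 ∈ s) ↔ l.2 = true

/-- A fix-action is applicable to a state if the state satisfies every
literal of its precondition. -/
def FixAction.applicable (f : FixAction P) (s : Finset P) : Prop :=
  ∀ l ∈ f.pre, satLit s l

/-- The result `s[f]` of applying a fix-action: every proposition occurring
positively in `post f`, together with every proposition of `s` whose
negation does not occur in `post f`. -/
def FixAction.applyTo (f : FixAction P) (s : Finset P) : Finset P :=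
  (f.post.filter (fun l => l.2 = true)).image Prod.fst ∪
    s.filter (fun p => (p, false) ∉ f.post)

/-- Applicability of a finite sequence of fix-actions to a state. -/
def seqApplicable (s : Finset P) : List (FixAction P) → Prop
  | [] => True
  | f :: σ => f.applicable s ∧ seqApplicable (f.applyTo s) σ

/-- The result `s[σ]` of applying a sequence of fix-actions. -/
def seqApply (s : Finset P) : List (FixAction P) → Finset P
  | [] => s
  | f :: σ => seqApply (f.applyTo s) σ

/-- The cost of a sequence of fix-actions: the sum of the costs of its
elements. -/
noncomputable def seqCost (σ : List (FixAction P)) : ℝ :=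
  (σ.map FixAction.cost).sum

/-- `f₁` disables `f₂` if some literal in `post f₁` is the negation of a
literal in `pre f₂`. -/
def disablesFix (f₁ f₂ : FixAction P) : Prop :=
  ∃ (p : P) (b : Bool), (p, b) ∈ f₁.post ∧ (p, !b) ∈ f₂.pre

/-- `f₁` and `f₂` conflict if some literal in `post f₁` is the negation of a
literal in `post f₂`. -/
def conflictFix (f₁ f₂ : FixAction P) : Prop :=
  ∃ (p : P) (b : Bool), (p, b) ∈ f₁.post ∧ (p, !b) ∈ f₂.post

/-- `f₁` and `f₂` interfere if they conflict or either disables the other. -/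
def interfereFix (f₁ f₂ : FixAction P) : Prop :=
  conflictFix f₁ f₂ ∨ disablesFix f₁ f₂ ∨ disablesFix f₂ f₁

/-- A strong stubborn set `T ⊆ F` in state `s` for a set of literals `PL`:
(1) `T` satisfies the landmark condition for `PL` in `s`; (2) for every
`f ∈ T` applicable to `s`, all actions of `F` interfering with `f` belong to
`T`; (3) for every `f ∈ T` not applicable to `s`, some unsatisfied
precondition literal of `f` has all its achievers in `F` inside `T`. -/
def IsSSS (F : Finset (FixAction P)) (s : Finset P) (PL : Set (P × Bool))
    (T : Set (FixAction P)) : Prop :=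
  (∀ f ∈ T, f ∈ F) ∧
  (∀ σ : List (FixAction P), (∀ f ∈ σ, f ∈ F) → seqApplicable s σ →
    (∃ l ∈ PL, satLit (seqApply s σ) l) → ∃ f ∈ σ, f ∈ T) ∧
  (∀ f ∈ T, f.applicable s → ∀ f' ∈ F, interfereFix f' f → f' ∈ T) ∧
  (∀ f ∈ T, ¬ f.applicable s →
    ∃ l ∈ f.pre, ¬ satLit s l ∧ ∀ f' ∈ F, l ∈ f'.post → f' ∈ T)

/-!
Let `A` be the prefix of `σ` before `f_k`; no action of `A` lies in `T`. If `f_k` were not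
applicable in `s`, condition (3) would give an unsatisfied precondition literal of `f_k` all of
whose achievers lie in `T`; yet `A` must achieve it, since `f_k` is applicable after `A`. So `f_k`
is applicable in `s`, and condition (2) puts every action interfering with `f_k` into `T`; hence
`f_k` interferes with no action of `A`. Non-conflicting actions commute and a non-disabling action
preserves applicability, so `f_k` can be moved to the front of `σ`. The reordered sequence is a
permutation of `σ`, so it has the same cost.
-/

namespace FixAction

theorem mem_applyTo {f : FixAction P} {s : Finset P} {p : P} :
    p ∈ f.applyTo s ↔ (p, true) ∈ f.post ∨ (p ∈ s ∧ (p, false) ∉ f.post) := by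
  simp [applyTo]

theorem satLit_applyTo {f : FixAction P} {s : Finset P} {l : P × Bool} (h : satLit s l)
    (hl : (l.1, !l.2) ∉ f.post) : satLit (f.applyTo s) l := by
  obtain ⟨p, _ | _⟩ := l <;> simp_all [satLit, mem_applyTo]

theorem mem_post_of_satLit_applyTo {f : FixAction P} {s : Finset P} {l : P × Bool}
    (h : ¬ satLit s l) (h' : satLit (f.applyTo s) l) : l ∈ f.post := by
  obtain ⟨p, _ | _⟩ := l <;> simp_all [satLit, mem_applyTo]

theorem applyTo_comm {f g : FixAction P} (h : ¬ conflictFix f g) (s : Finset P) :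
    g.applyTo (f.applyTo s) = f.applyTo (g.applyTo s) := by
  have h₁ : ∀ p, (p, true) ∈ f.post → (p, false) ∉ g.post :=
    fun p hf hg => h ⟨p, true, hf, hg⟩
  have h₂ : ∀ p, (p, false) ∈ f.post → (p, true) ∉ g.post :=
    fun p hf hg => h ⟨p, false, hf, hg⟩
  ext p
  simp only [mem_applyTo]
  grind

theorem applicable_applyTo {f g : FixAction P} {s : Finset P} (hg : g.applicable s)
    (h : ¬ disablesFix f g) : g.applicable (f.applyTo s) :=
  fun l hl => satLit_applyTo (hg l hl) fun hf => h ⟨l.1, !l.2, hf, by simpa using hl⟩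

end FixAction

omit [DecidableEq P] in
theorem interfereFix_comm {f g : FixAction P} : interfereFix f g ↔ interfereFix g f := by
  suffices ∀ f g : FixAction P, interfereFix f g → interfereFix g f from
    ⟨this f g, this g f⟩
  rintro f g (⟨p, b, hf, hg⟩ | h | h)
  · exact .inl ⟨p, !b, hg, by simpa using hf⟩
  · exact .inr (.inr h)
  · exact .inr (.inl h)

theorem seqApply_append (s : Finset P) (A B : List (FixAction P)) :
    seqApply s (A ++ B) = seqApply (seqApply s A) B := by
  induction A generalizing s with
  | nil => rfl
  | cons f A ih => exact ih (f.applyTo s)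

theorem seqApplicable_append (s : Finset P) (A B : List (FixAction P)) :
    seqApplicable s (A ++ B) ↔ seqApplicable s A ∧ seqApplicable (seqApply s A) B := by
  induction A generalizing s with
  | nil => simp [seqApplicable, seqApply]
  | cons f A ih => simp [seqApplicable, seqApply, ih, and_assoc]

theorem exists_mem_post_of_satLit_seqApply {σ : List (FixAction P)} {s : Finset P}
    {l : P × Bool} (h : ¬ satLit s l) (h' : satLit (seqApply s σ) l) :
    ∃ f ∈ σ, l ∈ f.post := by
  induction σ generalizing s with
  | nil => exact absurd h' h
  | cons f σ ih =>
    by_cases hf : satLit (f.applyTo s) l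
    · exact ⟨f, List.mem_cons_self, FixAction.mem_post_of_satLit_applyTo h hf⟩
    · obtain ⟨g, hg, hlg⟩ := ih hf h'
      exact ⟨g, List.mem_cons_of_mem f hg, hlg⟩

theorem seqApply_applyTo {f : FixAction P} {A : List (FixAction P)}
    (h : ∀ g ∈ A, ¬ conflictFix f g) (s : Finset P) :
    seqApply (f.applyTo s) A = f.applyTo (seqApply s A) := by
  induction A generalizing s with
  | nil => rfl
  | cons g A ih =>
    simp only [List.forall_mem_cons] at h
    simp only [seqApply, FixAction.applyTo_comm h.1, ih h.2]

theorem seqApplicable_applyTo {f : FixAction P} {A : List (FixAction P)} {s : Finset P}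
    (hA : seqApplicable s A) (hc : ∀ g ∈ A, ¬ conflictFix f g)
    (hd : ∀ g ∈ A, ¬ disablesFix f g) : seqApplicable (f.applyTo s) A := by
  induction A generalizing s with
  | nil => trivial
  | cons g A ih =>
    simp only [List.forall_mem_cons] at hc hd
    refine ⟨FixAction.applicable_applyTo hA.1 hd.1, ?_⟩
    rw [FixAction.applyTo_comm hc.1]
    exact ih hA.2 hc.2 hd.2

theorem seqApply_cons_append {f : FixAction P} {A : List (FixAction P)}
    (h : ∀ g ∈ A, ¬ conflictFix f g) (s : Finset P) (B : List (FixAction P)) :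
    seqApply s (f :: (A ++ B)) = seqApply s (A ++ f :: B) := by
  simp only [seqApply, seqApply_append, seqApply_applyTo h]

theorem seqApplicable_cons_append {f : FixAction P} {A B : List (FixAction P)} {s : Finset P}
    (hf : f.applicable s) (hc : ∀ g ∈ A, ¬ conflictFix f g)
    (hd : ∀ g ∈ A, ¬ disablesFix f g) (h : seqApplicable s (A ++ f :: B)) :
    seqApplicable s (f :: (A ++ B)) := by
  rw [seqApplicable_append] at h
  refine ⟨hf, (seqApplicable_append _ _ _).2 ⟨seqApplicable_applyTo h.1 hc hd, ?_⟩⟩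
  rw [seqApply_applyTo hc]
  exact h.2.2

namespace IsSSS

variable {F : Finset (FixAction P)} {s : Finset P} {PL : Set (P × Bool)} {T : Set (FixAction P)}

theorem applicable_of_applicable_seqApply (hT : IsSSS F s PL T) {f : FixAction P}
    {A : List (FixAction P)} (hf : f ∈ T) (hA : ∀ g ∈ A, g ∈ F ∧ g ∉ T)
    (h : f.applicable (seqApply s A)) : f.applicable s := by
  by_contra hna
  obtain ⟨l, hl, hls, hachievers⟩ := hT.2.2.2 f hf hna
  obtain ⟨g, hg, hlg⟩ := exists_mem_post_of_satLit_seqApply hls (h l hl)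
  exact (hA g hg).2 (hachievers g (hA g hg).1 hlg)

theorem not_interfereFix (hT : IsSSS F s PL T) {f g : FixAction P} (hf : f ∈ T)
    (happ : f.applicable s) (hg : g ∈ F) (hgT : g ∉ T) : ¬ interfereFix f g :=
  fun h => hgT (hT.2.2.1 f hf happ g hg (interfereFix_comm.1 h))

end IsSSS

theorem sss_reordering_general
    {P : Type*} [DecidableEq P]
    (F : Finset (FixAction P)) (PL : Set (P × Bool)) (s : Finset P)
    (T : Set (FixAction P)) (hT : IsSSS F s PL T)
    (σ : List (FixAction P))
    (hσF : ∀ f ∈ σ, f ∈ F) (happ : seqApplicable s σ)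
    (hgoal : ∃ l ∈ PL, satLit (seqApply s σ) l)
    (k : Fin σ.length) (hk : σ.get k ∈ T)
    (hkmin : ∀ j : Fin σ.length, j < k → σ.get j ∉ T) :
    (σ.get k).applicable s ∧
    (∀ j : Fin σ.length, j < k → ¬ interfereFix (σ.get k) (σ.get j)) ∧
    seqApplicable s (σ.get k :: σ.eraseIdx (k : ℕ)) ∧
    seqCost (σ.get k :: σ.eraseIdx (k : ℕ)) = seqCost σ ∧
    seqApply s (σ.get k :: σ.eraseIdx (k : ℕ)) = seqApply s σ ∧
    (∃ τ : List (FixAction P), ∃ f₀ : FixAction P, ∃ rest : List (FixAction P),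
      τ = f₀ :: rest ∧ (∀ f ∈ τ, f ∈ F) ∧ seqApplicable s τ ∧
      (∃ l ∈ PL, satLit (seqApply s τ) l) ∧ seqCost τ = seqCost σ ∧
      f₀ ∈ T ∧ f₀.applicable s) := by
  set f := σ.get k
  set A := σ.take k
  have hσ : σ = A ++ f :: σ.drop (k + 1) := by simp [A, f]
  have herase : σ.eraseIdx k = A ++ σ.drop (k + 1) := List.eraseIdx_eq_take_drop_succ σ k
  have hperm : (f :: σ.eraseIdx k).Perm σ := List.getElem_cons_eraseIdx_perm k.isLt
  have hA : ∀ g ∈ A, g ∈ F ∧ g ∉ T := by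
    intro g hg
    obtain ⟨j, hj, rfl⟩ := List.mem_take_iff_getElem.1 hg
    exact ⟨hσF _ (List.getElem_mem _), hkmin ⟨j, by omega⟩ (Fin.mk_lt_of_lt_val (by omega))⟩
  have happ_f : f.applicable s := by
    rw [hσ, seqApplicable_append] at happ
    exact hT.applicable_of_applicable_seqApply hk hA happ.2.1
  have hindep : ∀ g ∈ A, ¬ interfereFix f g := fun g hg =>
    hT.not_interfereFix hk happ_f (hA g hg).1 (hA g hg).2
  have happ' : seqApplicable s (f :: σ.eraseIdx k) := by
    rw [herase]
    exact seqApplicable_cons_append happ_f (fun g hg h => hindep g hg (.inl h))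
      (fun g hg h => hindep g hg (.inr (.inl h))) (hσ ▸ happ)
  have hres : seqApply s (f :: σ.eraseIdx k) = seqApply s σ := by
    rw [herase, seqApply_cons_append (fun g hg h => hindep g hg (.inl h)), ← hσ]
  have hcost : seqCost (f :: σ.eraseIdx k) = seqCost σ := (hperm.map _).sum_eq
  refine ⟨happ_f, fun j hj => hT.not_interfereFix hk happ_f (hσF _ (σ.get_mem j)) (hkmin j hj),
    happ', hcost, hres, _, f, _, rfl, fun g hg => hσF g (hperm.subset hg), happ',
    hres ▸ hgoal, hcost, hk, happ_f⟩

/-- The strong-stubborn-set reordering theorem: for a minimal-cost sequence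
`σ` over `F` applicable to `s` whose result satisfies some literal of `PL`
(none being satisfied in `s`), the first action `f_k` of `σ` belonging to a
strong stubborn set `T` is applicable to `s`, does not interfere with any
earlier action, and moving it to the front gives an applicable sequence of
the same cost and the same resulting state; in particular some minimal-cost
achieving sequence starts with an action of `T` applicable to `s`. -/
theorem sss_reordering
    {P : Type*} [DecidableEq P]
    (F : Finset (FixAction P)) (PL : Set (P × Bool)) (s : Finset P)
    (hs : ∀ l ∈ PL, ¬ satLit s l)
    (T : Set (FixAction P)) (hT : IsSSS F s PL T)
    (σ : List (FixAction P)) (hne : σ ≠ [])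
    (hσF : ∀ f ∈ σ, f ∈ F) (happ : seqApplicable s σ)
    (hgoal : ∃ l ∈ PL, satLit (seqApply s σ) l)
    (hmin : ∀ τ : List (FixAction P), (∀ f ∈ τ, f ∈ F) → seqApplicable s τ →
      (∃ l ∈ PL, satLit (seqApply s τ) l) → seqCost σ ≤ seqCost τ)
    (k : Fin σ.length) (hk : σ.get k ∈ T)
    (hkmin : ∀ j : Fin σ.length, j < k → σ.get j ∉ T) :
    (σ.get k).applicable s ∧
    (∀ j : Fin σ.length, j < k → ¬ interfereFix (σ.get k) (σ.get j)) ∧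
    seqApplicable s (σ.get k :: σ.eraseIdx (k : ℕ)) ∧
    seqCost (σ.get k :: σ.eraseIdx (k : ℕ)) = seqCost σ ∧
    seqApply s (σ.get k :: σ.eraseIdx (k : ℕ)) = seqApply s σ ∧
    (∃ τ : List (FixAction P), ∃ f₀ : FixAction P, ∃ rest : List (FixAction P),
      τ = f₀ :: rest ∧ (∀ f ∈ τ, f ∈ F) ∧ seqApplicable s τ ∧
      (∃ l ∈ PL, satLit (seqApply s τ) l) ∧ seqCost τ = seqCost σ ∧
      f₀ ∈ T ∧ f₀.applicable s) :=
  sss_reordering_general F PL s T hT σ hσF happ hgoal k hk hkmin
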